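/- Let a ∈ ℂ, a ≠ 0, and let V be the Mathieu Fourier coefficients. For every integer n ≥ 3 and every z ∈ ℂ with |z| ≤ 1, one has S_{n+1}^{21}(n,z) = S_{n−1}^{21}(n,z) · Φ(n,z). -/

import Mathlib

open Complex

/-- Extended walk: `extWalk b e k j i` equals `b` for `i = 0`, `j (i-1)` for `1 ≤ i ≤ k`,
and `e` for `i > k`. -/
def extWalk (b e : ℤ) (k : ℕ) (j : Fin k → ℤ) : ℕ → ℤ := fun i =>
  if h : 1 ≤ i ∧ i ≤ k then j ⟨i - 1, by omega⟩ else if i = 0 then b else e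

/-- Generic term of the sums `S_k^{ij}(n,z)`: for a `k`-tuple `j` of integers avoiding `±n`,
the value `V(j₁ - b) V(j₂ - j₁) ⋯ V(j_k - j_{k-1}) V(e - j_k) / ∏_s (n² - j_s² + z)`. -/
noncomputable def Sterm (V : ℤ → ℂ) (n : ℕ) (z : ℂ) (b e : ℤ) (k : ℕ)
    (j : Fin k → {m : ℤ // m ≠ (n : ℤ) ∧ m ≠ -(n : ℤ)}) : ℂ :=
  (∏ i ∈ Finset.range (k + 1),
      V (extWalk b e k (fun s => (j s : ℤ)) (i + 1) - extWalk b e k (fun s => (j s : ℤ)) i)) /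
    ∏ s : Fin k, ((n : ℂ) ^ 2 - ((j s : ℤ) : ℂ) ^ 2 + z)

/-- The Mathieu Fourier coefficients: `V(2) = V(-2) = a` and `V(m) = 0` for `m ≠ ±2`. -/
noncomputable def mathieuV (a : ℂ) : ℤ → ℂ := fun m => if m = 2 ∨ m = -2 then a else 0

/-- `S_k^{21}(n,z)` for the Mathieu potential (for `k = 0` it equals `V(2n)`). -/
noncomputable def S21 (a : ℂ) (n : ℕ) (z : ℂ) (k : ℕ) : ℂ :=
  ∑' j : Fin k → {m : ℤ // m ≠ (n : ℤ) ∧ m ≠ -(n : ℤ)},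
    Sterm (mathieuV a) n z (-(n : ℤ)) (n : ℤ) k j

/-- `Φ(n,z) = ∑_{k=2}^{n-1} a² / ((n²-(-n+2k)²+z)(n²-(-n+2k-2)²+z))`. -/
noncomputable def PhiC (a : ℂ) (n : ℕ) (z : ℂ) : ℂ :=
  ∑ k ∈ Finset.Icc 2 (n - 1),
    a ^ 2 / (((n : ℂ) ^ 2 - (-(n : ℂ) + 2 * (k : ℂ)) ^ 2 + z) *
      ((n : ℂ) ^ 2 - (-(n : ℂ) + 2 * (k : ℂ) - 2) ^ 2 + z))

/-!
A term of `S_k^{21}(n,z)` is nonzero only if every step of the walk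
`-n = j₀, j₁, …, j_k, j_{k+1} = n` is `±2`, and such a walk has `(k + 1 - n)/2` backward steps.
For `k = n - 1` there are none, so only the rising walk `-n, -n+2, …, n` contributes, with value
`a^n / D`, where `D` is the product of its denominators. For `k = n + 1` there is exactly one
backward step; since the walk may not revisit `±n` in between, it is taken at a time `t` with
`2 ≤ t ≤ n - 1`. That walk visits the points of the rising walk and, once more, `-n+2t-2` and
`-n+2t`, so its term is `a^n / D` times the `t`-th summand of `Φ(n,z)`.
-/

open Finset

lemma extWalk_zero (b e : ℤ) {k : ℕ} (j : Fin k → ℤ) : extWalk b e k j 0 = b := by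
  simp [extWalk]

lemma extWalk_succ (b e : ℤ) {k : ℕ} (j : Fin k → ℤ) (s : Fin k) :
    extWalk b e k j (s + 1) = j s := by
  simp [extWalk]

lemma extWalk_add_one (b e : ℤ) {k : ℕ} (j : Fin k → ℤ) : extWalk b e k j (k + 1) = e := by
  simp [extWalk]

lemma extWalk_eq_of_forall {b e : ℤ} {k : ℕ} {j : Fin k → ℤ} (Q : ℕ → ℤ) (h0 : Q 0 = b)
    (hk : Q (k + 1) = e) (hj : ∀ s : Fin k, j s = Q (s + 1)) {i : ℕ} (hi : i ≤ k + 1) :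
    extWalk b e k j i = Q i := by
  unfold extWalk
  split_ifs with h h'
  · rw [hj]; congr 1; simp only; omega
  · rw [h', h0]
  · rw [show i = k + 1 by omega, hk]

section Steps

lemma sum_eq_of_forall_eq_two_or_eq_neg_two {ι : Type*} (s : Finset ι) (d : ι → ℤ)
    (hd : ∀ i ∈ s, d i = 2 ∨ d i = -2) :
    ∑ i ∈ s, d i = 2 * #s - 4 * #{i ∈ s | d i = -2} := by
  have h : ∀ i ∈ s, d i = 2 - 4 * if d i = -2 then 1 else 0 := by
    intro i hi
    rcases hd i hi with h | h <;> simp [h]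
  rw [sum_congr rfl h, sum_sub_distrib, ← mul_sum, sum_boole]
  simp [mul_comm]

def downSteps (P : ℕ → ℤ) (i : ℕ) : Finset ℕ := {m ∈ range i | P (m + 1) - P m = -2}

variable (P : ℕ → ℤ)

lemma downSteps_of_le {i M : ℕ} (h : i ≤ M) :
    downSteps P i = {m ∈ downSteps P M | m < i} := by
  ext m
  simp only [downSteps, mem_filter, mem_range]
  omega

lemma apply_eq_of_step_eq_two_or_eq_neg_two {M : ℕ}
    (hP : ∀ i < M, P (i + 1) - P i = 2 ∨ P (i + 1) - P i = -2) {i : ℕ} (hi : i ≤ M) :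
    P i = P 0 + 2 * i - 4 * #(downSteps P i) := by
  have h := sum_eq_of_forall_eq_two_or_eq_neg_two (range i) (fun m => P (m + 1) - P m)
    fun m hm => hP m (by rw [mem_range] at hm; omega)
  rw [sum_range_sub, card_range] at h
  rw [downSteps]
  omega

end Steps

section Mathieu

variable {a z : ℂ} {n : ℕ}

lemma mathieuV_of_eq {m : ℤ} (h : m = 2 ∨ m = -2) : mathieuV a m = a := if_pos h

def denom (n : ℕ) (z : ℂ) (m : ℤ) : ℂ := (n : ℂ) ^ 2 - (m : ℂ) ^ 2 + z

variable {b e : ℤ} {k : ℕ} {j : Fin k → {m : ℤ // m ≠ n ∧ m ≠ -n}}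

lemma step_of_Sterm_mathieuV_ne_zero (h : Sterm (mathieuV a) n z b e k j ≠ 0) :
    ∀ i < k + 1,
      extWalk b e k (fun s => (j s : ℤ)) (i + 1) - extWalk b e k (fun s => (j s : ℤ)) i = 2 ∨
      extWalk b e k (fun s => (j s : ℤ)) (i + 1) - extWalk b e k (fun s => (j s : ℤ)) i = -2 := by
  intro i hi
  by_contra hV
  exact h (by rw [Sterm, prod_eq_zero (mem_range.mpr hi) (if_neg hV), zero_div])

lemma Sterm_mathieuV_of_walk (Q : ℕ → ℤ) (h0 : Q 0 = b) (hk : Q (k + 1) = e)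
    (hQ : ∀ i < k + 1, Q (i + 1) - Q i = 2 ∨ Q (i + 1) - Q i = -2)
    (hj : ∀ s : Fin k, (j s : ℤ) = Q (s + 1)) :
    Sterm (mathieuV a) n z b e k j = a ^ (k + 1) / ∏ s ∈ range k, denom n z (Q (s + 1)) := by
  have hP : ∀ i ≤ k + 1, extWalk b e k (fun s => (j s : ℤ)) i = Q i :=
    fun i hi => extWalk_eq_of_forall Q h0 hk hj hi
  have hV : ∀ i ∈ range (k + 1), mathieuV a
      (extWalk b e k (fun s => (j s : ℤ)) (i + 1) - extWalk b e k (fun s => (j s : ℤ)) i) = a := by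
    intro i hi
    rw [mem_range] at hi
    rw [hP (i + 1) (by omega), hP i (by omega)]
    exact mathieuV_of_eq (hQ i hi)
  rw [Sterm, prod_congr rfl hV, prod_const, card_range,
    ← Fin.prod_univ_eq_prod_range (fun s => denom n z (Q (s + 1)))]
  simp only [denom, hj]

end Mathieu

section Walks

def risingWalk (n i : ℕ) : ℤ := -n + 2 * i

/-- The rising walk whose clock is set back by two steps after time `t`: it steps back once. -/
def returningWalk (n t i : ℕ) : ℤ := risingWalk n (if i ≤ t then i else i - 2)

def risingTuple (n : ℕ) : Fin (n - 1) → {m : ℤ // m ≠ n ∧ m ≠ -n} :=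
  fun s => ⟨risingWalk n (s + 1), by have := s.isLt; unfold risingWalk; omega⟩

def returningTuple (n : ℕ) (t : Icc 2 (n - 1)) : Fin (n + 1) → {m : ℤ // m ≠ n ∧ m ≠ -n} :=
  fun s => ⟨returningWalk n t (s + 1), by
    have := s.isLt
    have := mem_Icc.mp t.2
    unfold returningWalk risingWalk
    split_ifs <;> omega⟩

lemma returningTuple_ne_of_lt {n : ℕ} {t t' : Icc 2 (n - 1)} (hlt : (t : ℕ) < t') :
    returningTuple n t ≠ returningTuple n t' := by
  intro h
  have ht := mem_Icc.mp t.2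
  have hs := congrArg Subtype.val (congrFun h ⟨t, by omega⟩)
  simp only [returningTuple, returningWalk, risingWalk] at hs
  split_ifs at hs <;> omega

lemma returningTuple_injective (n : ℕ) : Function.Injective (returningTuple n) := fun _ _ h =>
  Subtype.ext <| le_antisymm (not_lt.mp fun hlt => returningTuple_ne_of_lt hlt h.symm)
    (not_lt.mp fun hlt => returningTuple_ne_of_lt hlt h)

variable {a z : ℂ} {n : ℕ}

lemma eq_risingTuple_of_Sterm_ne_zero (hn : 1 ≤ n) {j : Fin (n - 1) → {m : ℤ // m ≠ n ∧ m ≠ -n}}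
    (h : Sterm (mathieuV a) n z (-n) n (n - 1) j ≠ 0) : j = risingTuple n := by
  set P := extWalk (-n) n (n - 1) (fun s => (j s : ℤ))
  have hpos := fun {i} => apply_eq_of_step_eq_two_or_eq_neg_two P
    (step_of_Sterm_mathieuV_ne_zero h) (i := i)
  have hP0 : P 0 = -n := extWalk_zero _ _ _
  have hnone : downSteps P (n - 1 + 1) = ∅ := by
    have hend := hpos le_rfl
    rw [hP0, show P (n - 1 + 1) = n from extWalk_add_one _ _ _] at hend
    exact card_eq_zero.mp (by omega)
  funext s
  apply Subtype.ext
  show (j s : ℤ) = risingWalk n (s + 1)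
  rw [← show P (s + 1) = j s from extWalk_succ _ _ _ s, hpos (by omega),
    downSteps_of_le P (show (s : ℕ) + 1 ≤ n - 1 + 1 by omega), hnone, filter_empty, card_empty,
    hP0, risingWalk]
  push_cast
  ring

lemma exists_eq_returningTuple_of_Sterm_ne_zero (hn : 1 ≤ n)
    {j : Fin (n + 1) → {m : ℤ // m ≠ n ∧ m ≠ -n}}
    (h : Sterm (mathieuV a) n z (-n) n (n + 1) j ≠ 0) : ∃ t, j = returningTuple n t := by
  set P := extWalk (-n) n (n + 1) (fun s => (j s : ℤ))
  have hpos := fun {i} => apply_eq_of_step_eq_two_or_eq_neg_two P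
    (step_of_Sterm_mathieuV_ne_zero h) (i := i)
  have hP0 : P 0 = -n := extWalk_zero _ _ _
  have hPj : ∀ s : Fin (n + 1), P (s + 1) = j s := extWalk_succ _ _ _
  obtain ⟨t, ht⟩ : ∃ t, downSteps P (n + 1 + 1) = {t} := by
    have hend := hpos le_rfl
    rw [hP0, show P (n + 1 + 1) = n from extWalk_add_one _ _ _] at hend
    exact card_eq_one.mp (by omega)
  have hwalk : ∀ i ≤ n + 1 + 1, P i = -n + 2 * i - 4 * if t < i then 1 else 0 := by
    intro i hi
    rw [hpos hi, downSteps_of_le P hi, ht, filter_singleton, apply_ite card, card_singleton,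
      card_empty, hP0]
    split_ifs <;> simp
  -- otherwise the walk would be back at `-n` at time `2`, or already at `n` at time `n`
  have ht2 : 2 ≤ t := by
    have := hwalk (1 + 1) (by omega)
    have := ((hPj ⟨1, by omega⟩).trans_ne (j _).2.2)
    simp only at this
    split_ifs at * <;> omega
  have htn : t ≤ n - 1 := by
    have := hwalk n (by omega)
    have := ((hPj ⟨n - 1, by omega⟩).trans_ne (j _).2.1)
    simp only [show n - 1 + 1 = n by omega] at this
    split_ifs at * <;> omega
  refine ⟨⟨t, mem_Icc.mpr ⟨ht2, htn⟩⟩, funext fun s => Subtype.ext ?_⟩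
  show (j s : ℤ) = returningWalk n t (s + 1)
  rw [← hPj, hwalk _ (by omega), returningWalk, risingWalk]
  split_ifs <;> omega

end Walks

lemma prod_range_comp_ite_sub_two {M : Type*} [CommMonoid M] (f : ℕ → M) {t m : ℕ}
    (h2 : 2 ≤ t) (ht : t ≤ m + 2) :
    ∏ s ∈ range (m + 2), f (if s + 1 ≤ t then s + 1 else s + 1 - 2) =
      f (t - 1) * f t * ∏ s ∈ range m, f (s + 1) := by
  obtain ⟨u, rfl⟩ : ∃ u, t = u + 2 := ⟨t - 2, by omega⟩
  replace ht : u ≤ m := by omega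
  induction m, ht using Nat.le_induction with
  | base =>
    rw [prod_congr rfl fun s hs => by rw [if_pos (by rw [mem_range] at hs; omega)],
      show u + 2 = u + 1 + 1 from rfl, prod_range_succ, prod_range_succ, Nat.add_sub_cancel]
    exact mul_rotate _ _ _
  | succ m _ ih =>
    rw [show m + 1 + 2 = m + 2 + 1 by ring, prod_range_succ, ih, if_neg (by omega),
      prod_range_succ, show m + 2 + 1 - 2 = m + 1 by omega, mul_assoc]

section Sums

variable {a z : ℂ} {n : ℕ}

lemma S21_sub_one (hn : 1 ≤ n) :
    S21 a n z (n - 1) = a ^ n / ∏ s ∈ range (n - 1), denom n z (risingWalk n (s + 1)) := by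
  rw [S21, tsum_eq_single (risingTuple n) fun j hj =>
      not_not.mp fun h => hj (eq_risingTuple_of_Sterm_ne_zero hn h),
    Sterm_mathieuV_of_walk (risingWalk n) (by simp [risingWalk])
      (by rw [Nat.sub_add_cancel hn, risingWalk]; ring)
      (fun i _ => Or.inl (by simp only [risingWalk]; push_cast; ring)) (fun _ => rfl),
    Nat.sub_add_cancel hn]

lemma S21_add_one (hn : 1 ≤ n) :
    S21 a n z (n + 1) = ∑ t ∈ Icc 2 (n - 1), a ^ (n + 2) /
      (denom n z (risingWalk n (t - 1)) * denom n z (risingWalk n t) *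
        ∏ s ∈ range (n - 1), denom n z (risingWalk n (s + 1))) := by
  rw [S21, ← (returningTuple_injective n).tsum_eq fun j hj => ?_, tsum_fintype,
    ← sum_coe_sort (Icc 2 (n - 1))]
  · refine sum_congr rfl fun t _ => ?_
    have ht := mem_Icc.mp t.2
    rw [Sterm_mathieuV_of_walk (returningWalk n t) (by simp [returningWalk, risingWalk])
      (by simp only [returningWalk, risingWalk]; split_ifs <;> omega)
      (fun i _ => by simp only [returningWalk, risingWalk]; split_ifs <;> omega) (fun _ => rfl)]
    have hden := prod_range_comp_ite_sub_two (fun i => denom n z (risingWalk n i)) ht.1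
      (show (t : ℕ) ≤ n - 1 + 2 by omega)
    rw [show n - 1 + 2 = n + 1 by omega] at hden
    exact congrArg _ hden
  · obtain ⟨t, rfl⟩ := exists_eq_returningTuple_of_Sterm_ne_zero hn hj
    exact Set.mem_range_self t

end Sums

theorem mathieu_stmt_15_general (a : ℂ) (n : ℕ) (hn : 3 ≤ n) (z : ℂ) :
    S21 a n z (n + 1) = S21 a n z (n - 1) * PhiC a n z := by
  rw [S21_add_one (by omega), S21_sub_one (by omega), PhiC, mul_sum]
  refine sum_congr rfl fun t ht => ?_
  have ht1 : 1 ≤ t := by rw [mem_Icc] at ht; omega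
  have hE : denom n z (risingWalk n t) = (n : ℂ) ^ 2 - (-(n : ℂ) + 2 * t) ^ 2 + z := by
    simp [denom, risingWalk]
  have hF : denom n z (risingWalk n (t - 1)) = (n : ℂ) ^ 2 - (-(n : ℂ) + 2 * t - 2) ^ 2 + z := by
    simp only [denom, risingWalk]
    push_cast [Nat.cast_sub ht1]
    ring
  rw [div_mul_div_comm, ← pow_add, hE, hF]
  congr 1
  ring

/-- For the Mathieu potential, `S_{n+1}^{21}(n,z) = S_{n-1}^{21}(n,z) · Φ(n,z)`. -/
theorem mathieu_stmt_15 (a : ℂ) (ha : a ≠ 0) (n : ℕ) (hn : 3 ≤ n) (z : ℂ) (hz : ‖z‖ ≤ 1) :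
    S21 a n z (n + 1) = S21 a n z (n - 1) * PhiC a n z :=
  mathieu_stmt_15_general a n hn z
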